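/- arXiv:2604.24593 — 3 statements merged into one kernel-verified Lean document; each statement's English description precedes it below -/
import Mathlib

section
/- Let n be a finite-dimensional real Lie algebra and let D₁, D₂ ∈ δ⁺(n). Then the expanded Lie algebras n(D₁) and n(D₂) are isomorphic as Lie algebras if and only if there exist g ∈ Aut(n), X ∈ n and a real number λ ≠ 0 such that D₁ = g⁻¹ ∘ ad(X) ∘ g + λ · g⁻¹ ∘ D₂ ∘ g. -/
open Module

/-- `D` is a derivation of the real Lie algebra `L`. -/
def IsLieDeriv {L : Type*} [LieRing L] [LieAlgebra ℝ L] (D : Module.End ℝ L) : Prop :=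
  ∀ x y : L, D ⁅x, y⁆ = ⁅D x, y⁆ + ⁅x, D y⁆

/-- All eigenvalues (complex roots of the characteristic polynomial) of `f` have
positive real part; i.e. `f ∈ δ⁺` when `f` is a derivation. -/
def PosSpec {V : Type*} [AddCommGroup V] [Module ℝ V] [Module.Finite ℝ V]
    (f : Module.End ℝ V) : Prop :=
  ∀ z ∈ ((LinearMap.charpoly f).map (algebraMap ℝ ℂ)).roots, 0 < z.re

/-- The bracket of the expanded Lie algebra `n(D) = n ⊕ ℝ`, where `A_D = (0,1)`. -/
def expBracket {L : Type*} [LieRing L] [LieAlgebra ℝ L] (D : Module.End ℝ L)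
    (p q : L × ℝ) : L × ℝ :=
  (⁅p.1, q.1⁆ + p.2 • D q.1 - q.2 • D p.1, 0)

/-- The expanded Lie algebras `n(D₁)` and `n(D₂)` are isomorphic as Lie algebras:
there is a linear equivalence of `n ⊕ ℝ` carrying one bracket to the other. -/
def ExpIso {L : Type*} [LieRing L] [LieAlgebra ℝ L] (D₁ D₂ : Module.End ℝ L) : Prop :=
  ∃ e : (L × ℝ) ≃ₗ[ℝ] (L × ℝ), ∀ p q, e (expBracket D₁ p q) = expBracket D₂ (e p) (e q)

/-!
An element `D ∈ δ⁺(n)` is invertible, so `n × {0}` is exactly the derived algebra of `n(D)`.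
Hence an isomorphism `n(D₁) ≅ n(D₂)` restricts to an automorphism `g` of `n` and sends `A_{D₁}`
to some `X + λ A_{D₂}`, with `λ ≠ 0` because it is onto modulo `n`; evaluating it on
`[A_{D₁}, y] = D₁ y` gives `g D₁ = ad X ∘ g + λ D₂ g`. Conversely, given such `g, X, λ`, the map
`(y, s) ↦ (g y + s X, λ s)` is an isomorphism `n(D₁) ≅ n(D₂)`.
-/

lemma PosSpec.injective {V : Type*} [AddCommGroup V] [Module ℝ V] [Module.Finite ℝ V]
    {f : Module.End ℝ V} (hf : PosSpec f) : Function.Injective f := by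
  rw [← LinearMap.ker_eq_bot]
  by_contra hker
  have h0 : f.HasEigenvalue 0 := by
    rwa [Module.End.hasEigenvalue_iff, Module.End.eigenspace_zero]
  have hroot := (Module.End.hasEigenvalue_iff_isRoot_charpoly f 0).mp h0
  have hmem : (0 : ℂ) ∈ (f.charpoly.map (algebraMap ℝ ℂ)).roots := by
    rw [Polynomial.mem_roots (f.charpoly_monic.map _).ne_zero]
    simpa using hroot.map (f := algebraMap ℝ ℂ)
  simpa using hf 0 hmem

lemma PosSpec.surjective {V : Type*} [AddCommGroup V] [Module ℝ V] [Module.Finite ℝ V]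
    {f : Module.End ℝ V} (hf : PosSpec f) : Function.Surjective f :=
  LinearMap.injective_iff_surjective.mp hf.injective

def LinearEquiv.restrictInl {R M : Type*} [Semiring R] [AddCommMonoid M] [Module R M]
    (e : (M × R) ≃ₗ[R] (M × R)) (he : ∀ y, (e (y, 0)).2 = 0)
    (he' : ∀ y, (e.symm (y, 0)).2 = 0) : M ≃ₗ[R] M where
  toLinearMap := LinearMap.fst R M R ∘ₗ e.toLinearMap ∘ₗ LinearMap.inl R M R
  invFun y := (e.symm (y, 0)).1
  left_inv y := by
    have : e (y, 0) = ((e (y, 0)).1, 0) := Prod.ext rfl (he y)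
    simp [← this]
  right_inv y := by
    have : e.symm (y, 0) = ((e.symm (y, 0)).1, 0) := Prod.ext rfl (he' y)
    simp [← this]

lemma LinearEquiv.apply_inl_eq_restrictInl {R M : Type*} [Semiring R] [AddCommMonoid M]
    [Module R M] (e : (M × R) ≃ₗ[R] (M × R)) (he : ∀ y, (e (y, 0)).2 = 0)
    (he' : ∀ y, (e.symm (y, 0)).2 = 0) (y : M) :
    e (y, 0) = (e.restrictInl he he' y, 0) :=
  Prod.ext rfl (he y)

section ExpandedLieAlgebra

variable {L : Type*} [LieRing L] [LieAlgebra ℝ L] {D₁ D₂ : Module.End ℝ L}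

@[simp]
lemma expBracket_snd (D : Module.End ℝ L) (p q : L × ℝ) : (expBracket D p q).2 = 0 := rfl

@[simp]
lemma expBracket_inl_inl (D : Module.End ℝ L) (y z : L) :
    expBracket D (y, 0) (z, 0) = (⁅y, z⁆, 0) := by
  simp [expBracket]

@[simp]
lemma expBracket_zero_one_inl (D : Module.End ℝ L) (y : L) :
    expBracket D (0, 1) (y, 0) = (D y, 0) := by
  simp [expBracket]

lemma expBracket_apply_inl (D : Module.End ℝ L) (p : L × ℝ) (y : L) :
    expBracket D p (y, 0) = (⁅p.1, y⁆ + p.2 • D y, 0) := by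
  simp [expBracket]

lemma expBracket_symm_of_intertwines {e : (L × ℝ) ≃ₗ[ℝ] (L × ℝ)}
    (he : ∀ p q, e (expBracket D₁ p q) = expBracket D₂ (e p) (e q)) (p q : L × ℝ) :
    e.symm (expBracket D₂ p q) = expBracket D₁ (e.symm p) (e.symm q) := by
  rw [e.symm_apply_eq, he, e.apply_symm_apply, e.apply_symm_apply]

/-- When `D₁` is onto, every element of `n × {0}` is a bracket of `n(D₁)`, and all brackets of
`n(D₂)` lie in `n × {0}`. -/
lemma snd_apply_inl_of_intertwines (hD₁ : Function.Surjective D₁) {e : L × ℝ → L × ℝ}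
    (he : ∀ p q, e (expBracket D₁ p q) = expBracket D₂ (e p) (e q)) (y : L) :
    (e (y, 0)).2 = 0 := by
  obtain ⟨z, rfl⟩ := hD₁ y
  rw [← expBracket_zero_one_inl, he, expBracket_snd]

lemma ExpIso.exists_lieEquiv (h : ExpIso D₁ D₂) (hD₁ : Function.Surjective D₁)
    (hD₂ : Function.Surjective D₂) :
    ∃ (g : L ≃ₗ⁅ℝ⁆ L) (X : L) (lam : ℝ), lam ≠ 0 ∧
      ∀ y, g (D₁ y) = ⁅X, g y⁆ + lam • D₂ (g y) := by
  obtain ⟨e, he⟩ := h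
  have hinl := snd_apply_inl_of_intertwines hD₁ he
  have hinl' := snd_apply_inl_of_intertwines hD₂ (expBracket_symm_of_intertwines he)
  have hg := e.apply_inl_eq_restrictInl hinl hinl'
  let g : L ≃ₗ⁅ℝ⁆ L :=
    { e.restrictInl hinl hinl' with
      map_lie' := fun {y z} => by
        have h := he (y, 0) (z, 0)
        rw [expBracket_inl_inl, hg, hg, hg, expBracket_inl_inl] at h
        exact congrArg Prod.fst h }
  refine ⟨g, (e (0, 1)).1, (e (0, 1)).2, fun hlam => ?_, fun y => ?_⟩
  · have h01 : e.symm ((e (0, 1)).1, 0) = (0, 1) := by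
      rw [← hlam, e.symm_apply_apply]
    have h := hinl' (e (0, 1)).1
    rw [h01] at h
    exact one_ne_zero h
  · have h := he (0, 1) (y, 0)
    rw [expBracket_zero_one_inl, hg, hg, expBracket_apply_inl] at h
    exact congrArg Prod.fst h

/-- Extends `g` by `A_{D₁} ↦ X + lam • A_{D₂}`. -/
noncomputable def expandEquiv (g : L ≃ₗ⁅ℝ⁆ L) (X : L) {lam : ℝ} (hlam : lam ≠ 0) :
    (L × ℝ) ≃ₗ[ℝ] (L × ℝ) where
  toFun p := (g p.1 + p.2 • X, lam * p.2)
  invFun q := (g.symm (q.1 - (lam⁻¹ * q.2) • X), lam⁻¹ * q.2)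
  map_add' p q := Prod.ext (by simp only [Prod.fst_add, Prod.snd_add, map_add]; module)
    (by simp only [Prod.snd_add]; ring)
  map_smul' c p := Prod.ext
    (by simp only [Prod.smul_fst, Prod.smul_snd, map_smul, RingHom.id_apply]; module)
    (by simp only [Prod.smul_snd, smul_eq_mul, RingHom.id_apply]; ring)
  left_inv p := by simp [inv_mul_cancel_left₀ hlam]
  right_inv q := by simp [mul_inv_cancel_left₀ hlam]

lemma expandEquiv_intertwines (g : L ≃ₗ⁅ℝ⁆ L) (X : L) {lam : ℝ} (hlam : lam ≠ 0)
    (hg : ∀ y, g (D₁ y) = ⁅X, g y⁆ + lam • D₂ (g y)) (p q : L × ℝ) :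
    expandEquiv g X hlam (expBracket D₁ p q) =
      expBracket D₂ (expandEquiv g X hlam p) (expandEquiv g X hlam q) := by
  obtain ⟨y, s⟩ := p
  obtain ⟨z, t⟩ := q
  refine Prod.ext ?_ (by simp [expandEquiv, expBracket])
  have hskew : ⁅g y, X⁆ = -⁅X, g y⁆ := neg_eq_iff_eq_neg.mp (lie_skew X (g y))
  simp only [expandEquiv, expBracket, LinearEquiv.coe_mk, LinearMap.coe_mk, AddHom.coe_mk,
    zero_smul, add_zero, map_sub, map_add, map_smul, LieEquiv.map_lie, hg, lie_add, add_lie,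
    lie_smul, smul_lie, lie_self, hskew, smul_add]
  module

lemma expIso_of_lieEquiv (g : L ≃ₗ⁅ℝ⁆ L) (X : L) {lam : ℝ} (hlam : lam ≠ 0)
    (hg : ∀ y, g (D₁ y) = ⁅X, g y⁆ + lam • D₂ (g y)) : ExpIso D₁ D₂ :=
  ⟨expandEquiv g X hlam, expandEquiv_intertwines g X hlam hg⟩

lemma LieEquiv.eq_symm_lie_add_smul_symm_iff (g : L ≃ₗ⁅ℝ⁆ L) (D : Module.End ℝ L)
    (X y w : L) (lam : ℝ) :
    w = g.symm ⁅X, g y⁆ + lam • g.symm (D (g y)) ↔ g w = ⁅X, g y⁆ + lam • D (g y) := by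
  rw [← map_smul, ← map_add, g.eq_symm_apply]

end ExpandedLieAlgebra

theorem stmt1_general {n : Type*} [LieRing n] [LieAlgebra ℝ n] [Module.Finite ℝ n]
    (D₁ D₂ : Module.End ℝ n)
    (hp₁ : PosSpec D₁) (hp₂ : PosSpec D₂) :
    ExpIso D₁ D₂ ↔
      ∃ (g : n ≃ₗ⁅ℝ⁆ n) (X : n) (lam : ℝ), lam ≠ 0 ∧
        ∀ y : n, D₁ y = g.symm ⁅X, g y⁆ + lam • g.symm (D₂ (g y)) := by
  simp only [LieEquiv.eq_symm_lie_add_smul_symm_iff]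
  refine ⟨fun h => h.exists_lieEquiv hp₁.surjective hp₂.surjective, ?_⟩
  rintro ⟨g, X, lam, hlam, hg⟩
  exact expIso_of_lieEquiv g X hlam hg

theorem stmt1 {n : Type*} [LieRing n] [LieAlgebra ℝ n] [Module.Finite ℝ n]
    (D₁ D₂ : Module.End ℝ n) (h₁ : IsLieDeriv D₁) (h₂ : IsLieDeriv D₂)
    (hp₁ : PosSpec D₁) (hp₂ : PosSpec D₂) :
    ExpIso D₁ D₂ ↔
      ∃ (g : n ≃ₗ⁅ℝ⁆ n) (X : n) (lam : ℝ), lam ≠ 0 ∧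
        ∀ y : n, D₁ y = g.symm ⁅X, g y⁆ + lam • g.symm (D₂ (g y)) :=
  stmt1_general D₁ D₂ hp₁ hp₂
end

section
/- Let n₃ be the 3-dimensional real Heisenberg Lie algebra with basis e₁,e₂,e₃ and brackets [e₁,e₂]=e₃, [e₁,e₃]=[e₂,e₃]=0, and let D ∈ δ⁺(n₃) have matrix with columns (x₁₁,x₂₁,x₃₁), (x₁₂,x₂₂,x₃₂), (0,0,x₁₁+x₂₂) with respect to e₁,e₂,e₃. Then D is conjugate by an automorphism of n₃ to the derivation D̃ whose matrix with respect to e₁,e₂,e₃ has columns (x₁₁,x₂₁,0), (x₁₂,x₂₂,0), (0,0,x₁₁+x₂₂); that is, there exists A ∈ Aut(n₃) with A ∘ D = D̃ ∘ A. -/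
open Module

/-! The shears `x ↦ x + (a x₀ + b x₁) e₂` are automorphisms of the Heisenberg algebra, since
`e₂` spans both the centre and the derived algebra. Conjugating `D` by such a shear changes
the `e₂`-components of `D e₀` and `D e₁` by a linear function of `(a, b)` whose determinant is
that of the `2 × 2` block of `D`. This block is invertible: `det D` is its determinant times
`x₁₁ + x₂₂`, and `0` is not an eigenvalue of `D`. So a shear can be chosen that kills both
components. -/

namespace LieEquiv

variable {R L : Type*} [CommRing R] [LieRing L] [LieAlgebra R L] (φ : L →ₗ[R] L)
  (h_central : ∀ x y : L, ⁅φ x, y⁆ = 0) (h_lie : ∀ x y : L, φ ⁅x, y⁆ = 0)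
  (h_sq : ∀ x, φ (φ x) = 0)

def shear : L ≃ₗ⁅R⁆ L where
  toLinearMap := LinearMap.id + φ
  map_lie' {x y} := by
    have h_central' (x y : L) : ⁅x, φ y⁆ = 0 := by rw [← lie_skew, h_central, neg_zero]
    simp [h_lie, lie_add, add_lie, h_central, h_central']
  invFun x := x - φ x
  left_inv x := by simp [h_sq]
  right_inv x := by simp [h_sq]

theorem shear_apply (x : L) : shear φ h_central h_lie h_sq x = x + φ x := rfl

theorem shear_symm_apply (x : L) : (shear φ h_central h_lie h_sq).symm x = x - φ x := rfl

end LieEquiv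

theorem LinearMap.det_ne_zero_of_posSpec {V : Type*} [AddCommGroup V] [Module ℝ V]
    [Module.Finite ℝ V] {f : Module.End ℝ V} (hf : PosSpec f) : LinearMap.det f ≠ 0 := by
  intro hdet
  have hcoeff : (LinearMap.charpoly f).coeff 0 = 0 := by
    rw [← Polynomial.constantCoeff_apply]
    exact (LinearMap.hasEigenvalue_zero_tfae f).out 3 2 |>.mp hdet
  have hroot : (0 : ℂ) ∈ ((LinearMap.charpoly f).map (algebraMap ℝ ℂ)).roots := by
    rw [Polynomial.mem_roots ((LinearMap.charpoly_monic f).map _).ne_zero, Polynomial.IsRoot,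
      Polynomial.eval_map, Polynomial.eval₂_at_zero, hcoeff, map_zero]
  simpa using hf 0 hroot

theorem LinearMap.det_eq_of_apply_basis_fin_three {R M : Type*} [CommRing R] [AddCommGroup M]
    [Module R M] (e : Basis (Fin 3) R M) {f : M →ₗ[R] M} {x11 x21 x31 x12 x22 x32 c : R}
    (h0 : f (e 0) = x11 • e 0 + x21 • e 1 + x31 • e 2)
    (h1 : f (e 1) = x12 • e 0 + x22 • e 1 + x32 • e 2)
    (h2 : f (e 2) = c • e 2) :
    LinearMap.det f = (x11 * x22 - x12 * x21) * c := by
  have hM : LinearMap.toMatrix e e f = !![x11, x12, 0; x21, x22, 0; x31, x32, c] := by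
    ext i j
    fin_cases i <;> fin_cases j <;> simp [LinearMap.toMatrix_apply, h0, h1, h2]
  rw [← LinearMap.det_toMatrix e, hM, Matrix.det_fin_three]
  simp only [Matrix.of_apply, Matrix.cons_val', Matrix.cons_val_zero, Matrix.cons_val_one,
    Matrix.cons_val, Matrix.cons_val_fin_one]
  ring

section Heisenberg

variable {R L : Type*} [CommRing R] [LieRing L] [LieAlgebra R L] (e : Basis (Fin 3) R L)

theorem lie_eq_of_heisenberg_basis (h12 : ⁅e 0, e 1⁆ = e 2) (h13 : ⁅e 0, e 2⁆ = 0)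
    (h23 : ⁅e 1, e 2⁆ = 0) (x y : L) :
    ⁅x, y⁆ = (e.repr x 0 * e.repr y 1 - e.repr x 1 * e.repr y 0) • e 2 := by
  have h_expand (z : L) : z = e.repr z 0 • e 0 + e.repr z 1 • e 1 + e.repr z 2 • e 2 :=
    (e.sum_repr z).symm.trans (Fin.sum_univ_three _)
  conv_lhs => rw [h_expand x, h_expand y]
  simp only [lie_add, add_lie, lie_smul, smul_lie, lie_self, h12, h13, h23,
    ← lie_skew (e 1) (e 0), ← lie_skew (e 2) (e 0), ← lie_skew (e 2) (e 1)]
  module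

variable (h12 : ⁅e 0, e 1⁆ = e 2) (h13 : ⁅e 0, e 2⁆ = 0) (h23 : ⁅e 1, e 2⁆ = 0)

noncomputable def heisenbergShear (a b : R) : L ≃ₗ⁅R⁆ L :=
  LieEquiv.shear ((a • e.coord 0 + b • e.coord 1).smulRight (e 2))
    (fun x y => by simp [lie_eq_of_heisenberg_basis e h12 h13 h23])
    (fun x y => by simp [lie_eq_of_heisenberg_basis e h12 h13 h23])
    (fun x => by simp)

theorem heisenbergShear_conj_apply (a b : R) {f : Module.End R L} {c : R}
    (hf : f (e 2) = c • e 2) (x : L) :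
    heisenbergShear e h12 h13 h23 a b (f ((heisenbergShear e h12 h13 h23 a b).symm x)) =
      f x + (a * e.repr (f x) 0 + b * e.repr (f x) 1
        - c * (a * e.repr x 0 + b * e.repr x 1)) • e 2 := by
  simp [heisenbergShear, LieEquiv.shear_apply, LieEquiv.shear_symm_apply, hf]
  module

end Heisenberg

theorem stmt7_general {L : Type*} [LieRing L] [LieAlgebra ℝ L] [Module.Finite ℝ L]
    (e : Basis (Fin 3) ℝ L)
    (h12 : ⁅e 0, e 1⁆ = e 2) (h13 : ⁅e 0, e 2⁆ = 0) (h23 : ⁅e 1, e 2⁆ = 0)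
    (D : Module.End ℝ L) (hpos : PosSpec D)
    (x11 x21 x31 x12 x22 x32 : ℝ)
    (h0 : D (e 0) = x11 • e 0 + x21 • e 1 + x31 • e 2)
    (h1 : D (e 1) = x12 • e 0 + x22 • e 1 + x32 • e 2)
    (h2 : D (e 2) = (x11 + x22) • e 2) :
    ∃ (D' : Module.End ℝ L) (A : L ≃ₗ⁅ℝ⁆ L),
      D' (e 0) = x11 • e 0 + x21 • e 1 ∧
      D' (e 1) = x12 • e 0 + x22 • e 1 ∧
      D' (e 2) = (x11 + x22) • e 2 ∧
      ∀ y : L, A (D y) = D' (A y) := by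
  have hdet : x11 * x22 - x12 * x21 ≠ 0 := by
    have := LinearMap.det_ne_zero_of_posSpec hpos
    rw [LinearMap.det_eq_of_apply_basis_fin_three e h0 h1 h2] at this
    exact left_ne_zero_of_mul this
  -- Cramer's rule
  obtain ⟨a, b, ha, hb⟩ : ∃ a b : ℝ, x31 - a * x22 + b * x21 = 0 ∧ x32 + a * x12 - b * x11 = 0 :=
    ⟨(x11 * x31 + x21 * x32) / (x11 * x22 - x12 * x21),
      (x12 * x31 + x22 * x32) / (x11 * x22 - x12 * x21),
      by linear_combination (-x31) * div_self hdet, by linear_combination (-x32) * div_self hdet⟩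
  set A := heisenbergShear e h12 h13 h23 a b
  have hconj (x : L) : A.toLinearEquiv.conj D x = A (D (A.symm x)) := rfl
  refine ⟨A.toLinearEquiv.conj D, A, ?_, ?_, ?_, fun y => by rw [hconj, A.symm_apply_apply]⟩ <;>
    rw [hconj, heisenbergShear_conj_apply e h12 h13 h23 a b h2]
  · simp only [h0, map_add, map_smul, Basis.repr_self, Finsupp.smul_single, Finsupp.add_apply,
      Finsupp.single_apply, Fin.reduceEq, ↓reduceIte, smul_eq_mul]
    linear_combination (norm := module) ha • e 2
  · simp only [h1, map_add, map_smul, Basis.repr_self, Finsupp.smul_single, Finsupp.add_apply,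
      Finsupp.single_apply, Fin.reduceEq, ↓reduceIte, smul_eq_mul]
    linear_combination (norm := module) hb • e 2
  · simp [h2]

theorem stmt7 {L : Type*} [LieRing L] [LieAlgebra ℝ L] [Module.Finite ℝ L]
    (e : Basis (Fin 3) ℝ L)
    (h12 : ⁅e 0, e 1⁆ = e 2) (h13 : ⁅e 0, e 2⁆ = 0) (h23 : ⁅e 1, e 2⁆ = 0)
    (D : Module.End ℝ L) (hD : IsLieDeriv D) (hpos : PosSpec D)
    (x11 x21 x31 x12 x22 x32 : ℝ)
    (h0 : D (e 0) = x11 • e 0 + x21 • e 1 + x31 • e 2)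
    (h1 : D (e 1) = x12 • e 0 + x22 • e 1 + x32 • e 2)
    (h2 : D (e 2) = (x11 + x22) • e 2) :
    ∃ (D' : Module.End ℝ L) (A : L ≃ₗ⁅ℝ⁆ L),
      D' (e 0) = x11 • e 0 + x21 • e 1 ∧
      D' (e 1) = x12 • e 0 + x22 • e 1 ∧
      D' (e 2) = (x11 + x22) • e 2 ∧
      ∀ y : L, A (D y) = D' (A y) :=
  stmt7_general e h12 h13 h23 D hpos x11 x21 x31 x12 x22 x32 h0 h1 h2
end

section
/- Let n₄ be the 4-dimensional real nilpotent Lie algebra with basis e₁,e₂,e₃,e₄ and nonzero brackets [e₁,e₂]=e₃, [e₁,e₃]=e₄, and let D ∈ δ⁺(n₄) have 2×2 upper-left block X̃ with rows (x₁₁,x₁₂),(x₂₁,x₂₂) with respect to this basis. Then x₁₁(2x₁₁+x₂₂) + det X̃ ≠ 0, and D is conjugate by an automorphism of n₄ to the derivation whose matrix with respect to e₁,e₂,e₃,e₄ is block diagonal with upper-left block X̃, (3,3)-entry x₁₁+x₂₂, (4,4)-entry 2x₁₁+x₂₂, and all other entries zero. -/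
open Module

theorem buildAuto {L : Type*} [LieRing L] [LieAlgebra ℝ L]
    (e : Basis (Fin 4) ℝ L)
    (h12 : ⁅e 0, e 1⁆ = e 2) (h13 : ⁅e 0, e 2⁆ = e 3) (h14 : ⁅e 0, e 3⁆ = 0)
    (h23 : ⁅e 1, e 2⁆ = 0) (h24 : ⁅e 1, e 3⁆ = 0) (h34 : ⁅e 2, e 3⁆ = 0)
    (a b c d : ℝ) :
    ∃ A : L ≃ₗ⁅ℝ⁆ L,
      A (e 0) = e 0 + a • e 2 + b • e 3 ∧
      A (e 1) = e 1 + c • e 2 + d • e 3 ∧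
      A (e 2) = e 2 + c • e 3 ∧
      A (e 3) = e 3 := by
  have h21 : ⁅e 1, e 0⁆ = -e 2 := by rw [← lie_skew, h12]
  have h31 : ⁅e 2, e 0⁆ = -e 3 := by rw [← lie_skew, h13]
  have h41 : ⁅e 3, e 0⁆ = 0 := by rw [← lie_skew, h14, neg_zero]
  have h32 : ⁅e 2, e 1⁆ = 0 := by rw [← lie_skew, h23, neg_zero]
  have h42 : ⁅e 3, e 1⁆ = 0 := by rw [← lie_skew, h24, neg_zero]
  have h43 : ⁅e 3, e 2⁆ = 0 := by rw [← lie_skew, h34, neg_zero]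
  set f : Fin 4 → L :=
    ![e 0 + a • e 2 + b • e 3, e 1 + c • e 2 + d • e 3, e 2 + c • e 3, e 3] with hf
  set g : Fin 4 → L :=
    ![e 0 - a • e 2 + (a * c - b) • e 3, e 1 - c • e 2 + (c * c - d) • e 3,
      e 2 - c • e 3, e 3] with hg
  set A := e.constr ℝ f with hA
  set B := e.constr ℝ g with hB
  have hAi : ∀ i, A (e i) = f i := fun i => e.constr_basis ℝ f i
  have hBi : ∀ i, B (e i) = g i := fun i => e.constr_basis ℝ g i
  have hA0 : A (e 0) = e 0 + a • e 2 + b • e 3 := by rw [hAi]; simp [hf]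
  have hA1 : A (e 1) = e 1 + c • e 2 + d • e 3 := by rw [hAi]; simp [hf]
  have hA2 : A (e 2) = e 2 + c • e 3 := by rw [hAi]; simp [hf]
  have hA3 : A (e 3) = e 3 := by rw [hAi]; simp [hf]
  have hB0 : B (e 0) = e 0 - a • e 2 + (a * c - b) • e 3 := by rw [hBi]; simp [hg]
  have hB1 : B (e 1) = e 1 - c • e 2 + (c * c - d) • e 3 := by rw [hBi]; simp [hg]
  have hB2 : B (e 2) = e 2 - c • e 3 := by rw [hBi]; simp [hg]
  have hB3 : B (e 3) = e 3 := by rw [hBi]; simp [hg]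
  have hAB : A ∘ₗ B = LinearMap.id := by
    apply e.ext; intro i
    fin_cases i <;>
      simp only [Fin.zero_eta, Fin.mk_one, Fin.reduceFinMk, LinearMap.comp_apply, LinearMap.id_apply, hB0, hB1, hB2, hB3,
        map_add, map_sub, map_smul, hA0, hA1, hA2, hA3] <;> module
  have hBA : B ∘ₗ A = LinearMap.id := by
    apply e.ext; intro i
    fin_cases i <;>
      simp only [Fin.zero_eta, Fin.mk_one, Fin.reduceFinMk, LinearMap.comp_apply, LinearMap.id_apply, hA0, hA1, hA2, hA3,
        map_add, map_sub, map_smul, hB0, hB1, hB2, hB3] <;> module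
  have hml : ∀ x y : L, A ⁅x, y⁆ = ⁅A x, A y⁆ := by
    have hbr : ∀ i j : Fin 4, A ⁅e i, e j⁆ = ⁅A (e i), A (e j)⁆ := by
      intro i j
      fin_cases i <;> fin_cases j <;>
        simp only [Fin.zero_eta, Fin.mk_one, Fin.reduceFinMk, h12, h13, h14, h23, h24, h34, h21, h31, h41, h32, h42, h43,
          lie_self, map_zero, map_add, map_smul, map_neg, hA0, hA1, hA2, hA3,
          add_lie, lie_add, smul_lie, lie_smul, neg_lie, lie_neg] <;>
      module
    intro x y
    obtain ⟨cx, rfl⟩ : ∃ cx : Fin 4 → ℝ, x = ∑ i, cx i • e i :=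
      ⟨e.repr x, (e.sum_repr x).symm⟩
    obtain ⟨cy, rfl⟩ : ∃ cy : Fin 4 → ℝ, y = ∑ i, cy i • e i :=
      ⟨e.repr y, (e.sum_repr y).symm⟩
    simp only [Fin.sum_univ_four, add_lie, lie_add, smul_lie, lie_smul,
      map_add, map_smul, hbr]
  refine ⟨{ toLinearMap := A, map_lie' := fun {x y} => hml x y, invFun := B,
            left_inv := fun x => by
              simpa using LinearMap.congr_fun hBA x,
            right_inv := fun x => by
              simpa using LinearMap.congr_fun hAB x }, hA0, hA1, hA2, hA3⟩


open Polynomial in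
theorem stmt14.charpolyAux {L : Type*} [LieRing L] [LieAlgebra ℝ L] [Module.Finite ℝ L]
    (e : Basis (Fin 4) ℝ L) (D : Module.End ℝ L) (x11 x21 x31 x41 x22 x32 x42 : ℝ)
    (h0 : D (e 0) = x11 • e 0 + x21 • e 1 + x31 • e 2 + x41 • e 3)
    (h1 : D (e 1) = (0:ℝ) • e 0 + x22 • e 1 + x32 • e 2 + x42 • e 3)
    (h2 : D (e 2) = (x11 + x22) • e 2 + x32 • e 3)
    (h3 : D (e 3) = (2 * x11 + x22) • e 3) :
    LinearMap.charpoly D =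
      (X - C x11) * (X - C x22) * (X - C (x11 + x22)) * (X - C (2 * x11 + x22)) := by
  rw [← LinearMap.charpoly_toMatrix D e]
  have hM : LinearMap.toMatrix e e D = Matrix.of
      ![![x11, 0, 0, 0], ![x21, x22, 0, 0], ![x31, x32, x11 + x22, 0],
        ![x41, x42, x32, 2 * x11 + x22]] := by
    ext i j
    fin_cases i <;> fin_cases j <;>
      simp [LinearMap.toMatrix_apply, h0, h1, h2, h3, Finsupp.single_apply]
  have hlt : (Matrix.of
      ![![x11, 0, 0, 0], ![x21, x22, 0, 0], ![x31, x32, x11 + x22, 0],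
        ![x41, x42, x32, 2 * x11 + x22]] : Matrix (Fin 4) (Fin 4) ℝ).BlockTriangular
        OrderDual.toDual := by
    intro i j hij
    fin_cases i <;> fin_cases j <;> first | rfl | exact absurd hij (by decide)
  rw [hM, Matrix.charpoly, Matrix.det_of_lowerTriangular _ hlt.charmatrix]
  simp [Fin.prod_univ_four, Matrix.charmatrix_apply_eq]

open Polynomial in
theorem stmt14 {L : Type*} [LieRing L] [LieAlgebra ℝ L] [Module.Finite ℝ L]
    (e : Basis (Fin 4) ℝ L)
    (h12 : ⁅e 0, e 1⁆ = e 2) (h13 : ⁅e 0, e 2⁆ = e 3) (h14 : ⁅e 0, e 3⁆ = 0)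
    (h23 : ⁅e 1, e 2⁆ = 0) (h24 : ⁅e 1, e 3⁆ = 0) (h34 : ⁅e 2, e 3⁆ = 0)
    (D : Module.End ℝ L) (hD : IsLieDeriv D) (hpos : PosSpec D)
    (x11 x21 x31 x41 x12 x22 x32 x42 : ℝ)
    (h0 : D (e 0) = x11 • e 0 + x21 • e 1 + x31 • e 2 + x41 • e 3)
    (h1 : D (e 1) = x12 • e 0 + x22 • e 1 + x32 • e 2 + x42 • e 3)
    (h2 : D (e 2) = (x11 + x22) • e 2 + x32 • e 3)
    (h3 : D (e 3) = (2 * x11 + x22) • e 3) :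
    x11 * (2 * x11 + x22) + (x11 * x22 - x12 * x21) ≠ 0 ∧
    ∃ (D' : Module.End ℝ L) (A : L ≃ₗ⁅ℝ⁆ L),
      D' (e 0) = x11 • e 0 + x21 • e 1 ∧
      D' (e 1) = x12 • e 0 + x22 • e 1 ∧
      D' (e 2) = (x11 + x22) • e 2 ∧
      D' (e 3) = (2 * x11 + x22) • e 3 ∧
      ∀ y : L, A (D y) = D' (A y) := by
  have h32' : ⁅e 2, e 1⁆ = 0 := by rw [← lie_skew, h23, neg_zero]
  have h43' : ⁅e 3, e 2⁆ = 0 := by rw [← lie_skew, h34, neg_zero]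
  -- x12 = 0
  have hx12 : x12 = 0 := by
    have key := hD (e 1) (e 2)
    rw [h23, h1, h2] at key
    simp only [map_zero, add_lie, lie_add, smul_lie, lie_smul, h13, h23, h24, h34, h32', h43',
      lie_self, smul_zero, zero_add, add_zero] at key
    rcases smul_eq_zero.1 key.symm with h | h
    · exact h
    · exact absurd h (e.ne_zero 3)
  subst hx12
  rw [zero_smul, zero_add] at h1
  have h1' : D (e 1) = (0:ℝ) • e 0 + x22 • e 1 + x32 • e 2 + x42 • e 3 := by
    rw [h1, zero_smul, zero_add]
  -- positivity of x11 and x22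
  have hchar := stmt14.charpolyAux e D x11 x21 x31 x41 x22 x32 x42 h0 h1' h2 h3
  have hmonic : (LinearMap.charpoly D).Monic := LinearMap.charpoly_monic D
  have hne : (LinearMap.charpoly D).map (algebraMap ℝ ℂ) ≠ 0 :=
    (hmonic.map _).ne_zero
  have hroot : ∀ t : ℝ, (t = x11 ∨ t = x22) → 0 < t := by
    intro t ht
    have hmem : (t : ℂ) ∈ ((LinearMap.charpoly D).map (algebraMap ℝ ℂ)).roots := by
      refine Polynomial.mem_roots'.2 ⟨hne, ?_⟩
      rw [hchar]
      rcases ht with rfl | rfl <;>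
        simp [Polynomial.IsRoot, Polynomial.eval_map, sub_self]
    simpa using hpos _ hmem
  have hx11 : 0 < x11 := hroot x11 (Or.inl rfl)
  have hx22 : 0 < x22 := hroot x22 (Or.inr rfl)
  refine ⟨by nlinarith, ?_⟩
  -- constants
  have hx11' : x11 ≠ 0 := ne_of_gt hx11
  have hx22' : x22 ≠ 0 := ne_of_gt hx22
  have hs' : x11 + x22 ≠ 0 := by positivity
  have hx11' : x11 ≠ 0 := ne_of_gt hx11
  have hx22' : x22 ≠ 0 := ne_of_gt hx22
  have hs' : x11 + x22 ≠ 0 := by positivity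
  obtain ⟨c, hc⟩ : ∃ c : ℝ, x11 * c = x32 := ⟨x32 / x11, by field_simp⟩
  obtain ⟨d, hd⟩ : ∃ d : ℝ, 2 * x11 * d = x32 * c + x42 :=
    ⟨(x32 * c + x42) / (2 * x11), by field_simp⟩
  obtain ⟨a, ha⟩ : ∃ a : ℝ, x22 * a = x21 * c + x31 := ⟨(x21 * c + x31) / x22, by field_simp⟩
  obtain ⟨b, hb⟩ : ∃ b : ℝ, (x11 + x22) * b = x21 * d + x31 * c + x41 :=
    ⟨(x21 * d + x31 * c + x41) / (x11 + x22), by field_simp⟩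
  obtain ⟨A, hA0, hA1, hA2, hA3⟩ := buildAuto e h12 h13 h14 h23 h24 h34 a b c d
  have hsm : ∀ (r : ℝ) (x : L), A (r • x) = r • A x := fun r x => A.toLieHom.map_smul r x
  have had : ∀ x y : L, A (x + y) = A x + A y := fun x y => A.toLieHom.map_add x y
  set v : Fin 4 → L := ![x11 • e 0 + x21 • e 1, (0:ℝ) • e 0 + x22 • e 1,
    (x11 + x22) • e 2, (2 * x11 + x22) • e 3] with hv
  set D' : Module.End ℝ L := e.constr ℝ v with hD'
  have hD'0 : D' (e 0) = x11 • e 0 + x21 • e 1 := by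
    rw [hD']; rw [e.constr_basis]; simp [hv]
  have hD'1 : D' (e 1) = (0:ℝ) • e 0 + x22 • e 1 := by
    rw [hD']; rw [e.constr_basis]; simp [hv]
  have hD'2 : D' (e 2) = (x11 + x22) • e 2 := by
    rw [hD']; rw [e.constr_basis]; simp [hv]
  have hD'3 : D' (e 3) = (2 * x11 + x22) • e 3 := by
    rw [hD']; rw [e.constr_basis]; simp [hv]
  refine ⟨D', A, hD'0, hD'1, hD'2, hD'3, ?_⟩
  have hc0 : A (D (e 0)) = D' (A (e 0)) := by
    rw [h0, hA0]
    simp only [had, hsm, map_add, map_smul, hA0, hA1, hA2, hA3, hD'0, hD'1, hD'2, hD'3]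
    match_scalars
    all_goals try ring
    all_goals try linear_combination (-ha)
    all_goals try linear_combination (-hb)
    all_goals try linear_combination (-hc)
    all_goals try linear_combination (-hd)
  have hc1 : A (D (e 1)) = D' (A (e 1)) := by
    rw [h1, hA1]
    simp only [had, hsm, map_add, map_smul, hA0, hA1, hA2, hA3, hD'0, hD'1, hD'2, hD'3]
    match_scalars
    all_goals try ring
    all_goals try linear_combination (-ha)
    all_goals try linear_combination (-hb)
    all_goals try linear_combination (-hc)
    all_goals try linear_combination (-hd)
  have hc2 : A (D (e 2)) = D' (A (e 2)) := by
    rw [h2, hA2]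
    simp only [had, hsm, map_add, map_smul, hA0, hA1, hA2, hA3, hD'2, hD'3]
    match_scalars
    all_goals try ring
    all_goals try linear_combination (-ha)
    all_goals try linear_combination (-hb)
    all_goals try linear_combination (-hc)
    all_goals try linear_combination (-hd)
  have hc3 : A (D (e 3)) = D' (A (e 3)) := by
    rw [h3, hsm, hA3, hD'3]
  intro y
  obtain ⟨cy, rfl⟩ : ∃ cy : Fin 4 → ℝ, y = ∑ i, cy i • e i :=
    ⟨e.repr y, (e.sum_repr y).symm⟩
  simp only [Fin.sum_univ_four, had, hsm, map_add, map_smul, hc0, hc1, hc2, hc3]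
end
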